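/- arXiv:1410.6852 — 4 statements merged into one kernel-verified Lean document; each statement's English description precedes it below -/
import Mathlib

section
/- Suppose the EDM completion problem is feasible with some realization in ℝ^r, and suppose that no realization of G in ℝ^l for any l > r spans ℝ^l. Then every solution X of the convex relaxation {X ∈ S^n_{c,+} : X_{ii}+X_{jj}−2X_{ij} = d_{ij} for all ij ∈ E} has rank at most r. -/
open Matrix BigOperators

/-- Points `x` realize the weighted graph `(E, d)` in `ℝ^l`. -/
def Realizes {n l : ℕ} (E : Set (Fin n × Fin n)) (d : Fin n → Fin n → ℝ)
    (x : Fin n → Fin l → ℝ) : Prop :=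
  ∀ p ∈ E, ∑ k, (x p.1 k - x p.2 k) ^ 2 = d p.1 p.2

/-!
A feasible `X` is positive semidefinite, hence the Gram matrix of vectors `v₁, …, vₙ`, and its
rank is the dimension `m` of their span. Coordinates of the `vᵢ` in an orthonormal basis of that
span are points of `ℝ^m` with the same Gram matrix, so they realize `G` and span `ℝ^m`; the
hypothesis on spanning realizations then forces `m ≤ r`.
-/

open Module Submodule Set

theorem LinearEquiv.span_range_comp_eq_top {R M N ι : Type*} [Semiring R] [AddCommMonoid M]
    [AddCommMonoid N] [Module R M] [Module R N] (e : M ≃ₗ[R] N) {x : ι → M}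
    (h : span R (range x) = ⊤) : span R (range (e ∘ x)) = ⊤ := by
  rw [Set.range_comp, ← e.coe_toLinearMap, ← map_span, h, Submodule.map_top, LinearEquiv.range]

section Gram

variable {𝕜 E ι : Type*} [RCLike 𝕜] [NormedAddCommGroup E] [InnerProductSpace 𝕜 E]

open scoped ComplexOrder in
theorem Matrix.rank_gram [Fintype ι] [FiniteDimensional 𝕜 E] (v : ι → E) :
    (gram 𝕜 v).rank = finrank 𝕜 (span 𝕜 (range v)) := by
  let e := (stdOrthonormalBasis 𝕜 E).repr.toLinearEquiv.trans (WithLp.linearEquiv 2 𝕜 _)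
  rw [gram_eq_conjTranspose_mul (stdOrthonormalBasis 𝕜 E), rank_conjTranspose_mul_self,
    rank_eq_finrank_span_cols, ← LinearEquiv.finrank_map_eq e, map_span, ← Set.range_comp]
  rfl

open scoped ComplexOrder MatrixOrder in
theorem Matrix.PosSemidef.exists_eq_gram [Fintype ι] [DecidableEq ι] {A : Matrix ι ι 𝕜}
    (hA : A.PosSemidef) : ∃ v : ι → EuclideanSpace 𝕜 ι, A = gram 𝕜 v := by
  set S := CFC.sqrt A
  refine ⟨fun j ↦ WithLp.toLp 2 (S.col j), ?_⟩
  have hS : Sᴴ = S := (nonneg_iff_posSemidef.mp (CFC.sqrt_nonneg A)).isHermitian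
  have hcoords :
      of (fun i j ↦ (EuclideanSpace.basisFun ι 𝕜).repr (WithLp.toLp 2 (S.col j)) i) = S := by
    ext i j
    simp
  rw [gram_eq_conjTranspose_mul (EuclideanSpace.basisFun ι 𝕜), hcoords, hS,
    CFC.sqrt_mul_sqrt_self A hA.nonneg]

theorem exists_euclideanSpace_gram_eq_and_span_eq_top [Finite ι] (v : ι → E) :
    ∃ x : ι → EuclideanSpace 𝕜 (Fin (finrank 𝕜 (span 𝕜 (range v)))),
      gram 𝕜 x = gram 𝕜 v ∧ span 𝕜 (range x) = ⊤ := by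
  have := FiniteDimensional.span_of_finite 𝕜 (finite_range v)
  let b := stdOrthonormalBasis 𝕜 (span 𝕜 (range v))
  let w : ι → span 𝕜 (range v) := fun i ↦ ⟨v i, subset_span (mem_range_self i)⟩
  have hw : span 𝕜 (range w) = ⊤ := by
    convert span_span_coe_preimage (R := 𝕜) (s := range v)
    ext u
    simp [w, Subtype.ext_iff, eq_comm]
  refine ⟨fun i ↦ b.repr (w i), ?_, b.repr.toLinearEquiv.span_range_comp_eq_top hw⟩
  ext i j
  simp [gram_apply, w]

end Gram

theorem realizes_ofLp_of_gram {n l : ℕ} {E : Set (Fin n × Fin n)} {d : Fin n → Fin n → ℝ}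
    {x : Fin n → EuclideanSpace ℝ (Fin l)}
    (h : ∀ p ∈ E, gram ℝ x p.1 p.1 + gram ℝ x p.2 p.2 - 2 * gram ℝ x p.1 p.2 = d p.1 p.2) :
    Realizes E d fun i ↦ (x i).ofLp := by
  intro p hp
  rw [← h p hp]
  simp only [gram_apply, real_inner_self_eq_norm_sq]
  rw [← sub_add_eq_add_sub, ← norm_sub_sq_real, EuclideanSpace.norm_sq_eq]
  simp

theorem relaxation_exact_general {n r : ℕ}
    (E : Set (Fin n × Fin n)) (d : Fin n → Fin n → ℝ)
    (hspan : ∀ l : ℕ, r < l → ∀ x : Fin n → Fin l → ℝ, Realizes E d x →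
      Submodule.span ℝ (Set.range x) ≠ ⊤) :
    ∀ X : Matrix (Fin n) (Fin n) ℝ, X.PosSemidef →
      X.mulVec (fun _ => (1 : ℝ)) = 0 →
      (∀ p ∈ E, X p.1 p.1 + X p.2 p.2 - 2 * X p.1 p.2 = d p.1 p.2) →
      X.rank ≤ r := by
  intro X hX _ hX_edges
  by_contra! hrank
  obtain ⟨v, rfl⟩ := hX.exists_eq_gram
  obtain ⟨x, hxv, hx⟩ := exists_euclideanSpace_gram_eq_and_span_eq_top (𝕜 := ℝ) v
  rw [rank_gram] at hrank
  rw [← hxv] at hX_edges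
  exact hspan _ hrank _ (realizes_ofLp_of_gram hX_edges)
    ((WithLp.linearEquiv 2 ℝ _).span_range_comp_eq_top hx)

theorem relaxation_exact {n r : ℕ}
    (E : Set (Fin n × Fin n)) (d : Fin n → Fin n → ℝ)
    (hfeas : ∃ x : Fin n → Fin r → ℝ, Realizes E d x)
    (hspan : ∀ l : ℕ, r < l → ∀ x : Fin n → Fin l → ℝ, Realizes E d x →
      Submodule.span ℝ (Set.range x) ≠ ⊤) :
    ∀ X : Matrix (Fin n) (Fin n) ℝ, X.PosSemidef →
      X.mulVec (fun _ => (1 : ℝ)) = 0 →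
      (∀ p ∈ E, X p.1 p.1 + X p.2 p.2 - 2 * X p.1 p.2 = d p.1 p.2) →
      X.rank ≤ r :=
  relaxation_exact_general E d hspan
end

section
/- For any n×r matrix U with orthonormal columns, any subset Q ⊆ S^r, and any X ∈ S^n: a matrix UZUᵀ with Z ∈ Q is a nearest point of the set UQUᵀ = {UYUᵀ : Y ∈ Q} to X (in Frobenius norm) if and only if Z is a nearest point of Q to UᵀXU. In particular proj(X; UQUᵀ) = U · proj(UᵀXU; Q) · Uᵀ. -/
open Matrix BigOperators

/-- The Frobenius norm of a real matrix. -/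
noncomputable def frobNorm {m k : ℕ} (A : Matrix (Fin m) (Fin k) ℝ) : ℝ :=
  Real.sqrt (∑ i, ∑ j, (A i j) ^ 2)

lemma sqnorm_eq_trace {m : ℕ} (A : Matrix (Fin m) (Fin m) ℝ) :
    ∑ i, ∑ j, (A i j) ^ 2 = (Aᵀ * A).trace := by
  simp only [Matrix.trace, Matrix.diag, Matrix.mul_apply, Matrix.transpose_apply, sq]
  rw [Finset.sum_comm]

lemma sqnorm_nonneg {m k : ℕ} (A : Matrix (Fin m) (Fin k) ℝ) :
    0 ≤ ∑ i, ∑ j, (A i j) ^ 2 :=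
  Finset.sum_nonneg fun _ _ => Finset.sum_nonneg fun _ _ => sq_nonneg _

theorem proj_onto_conjugated_set {n r : ℕ} (U : Matrix (Fin n) (Fin r) ℝ)
    (hU : Uᵀ * U = 1) (Q : Set (Matrix (Fin r) (Fin r) ℝ))
    (X : Matrix (Fin n) (Fin n) ℝ) (hX : X.IsSymm) :
    ∀ Z ∈ Q,
      ((∀ Y ∈ Q, frobNorm (X - U * Z * Uᵀ) ≤ frobNorm (X - U * Y * Uᵀ)) ↔
        (∀ Y ∈ Q, frobNorm (Uᵀ * X * U - Z) ≤ frobNorm (Uᵀ * X * U - Y))) := by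
  have hXt : Xᵀ = X := hX
  set A : Matrix (Fin r) (Fin r) ℝ := Uᵀ * X * U with hA
  have hAt : Aᵀ = A := by
    rw [hA]
    simp [Matrix.transpose_mul, hXt, Matrix.mul_assoc]
  -- key trace identities
  have t1 : ∀ Y : Matrix (Fin r) (Fin r) ℝ,
      (X * (U * Y * Uᵀ)).trace = (A * Y).trace := by
    intro Y
    rw [hA]
    rw [show X * (U * Y * Uᵀ) = (X * U * Y) * Uᵀ by
        simp only [Matrix.mul_assoc],
      Matrix.trace_mul_comm]
    simp only [Matrix.mul_assoc]
  have t2 : ∀ Y : Matrix (Fin r) (Fin r) ℝ,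
      ((U * Y * Uᵀ)ᵀ * X).trace = (Yᵀ * A).trace := by
    intro Y
    rw [hA]
    rw [show (U * Y * Uᵀ)ᵀ * X = U * (Yᵀ * (Uᵀ * X)) by
      simp [Matrix.transpose_mul, Matrix.mul_assoc], Matrix.trace_mul_comm]
    simp only [Matrix.mul_assoc]
  have t3 : ∀ Y : Matrix (Fin r) (Fin r) ℝ,
      ((U * Y * Uᵀ)ᵀ * (U * Y * Uᵀ)).trace = (Yᵀ * Y).trace := by
    intro Y
    have e : (U * Y * Uᵀ)ᵀ * (U * Y * Uᵀ) = U * ((Yᵀ * Y) * Uᵀ) := by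
      calc (U * Y * Uᵀ)ᵀ * (U * Y * Uᵀ)
          = U * (Yᵀ * ((Uᵀ * U) * (Y * Uᵀ))) := by
            simp [Matrix.transpose_mul, Matrix.mul_assoc]
        _ = U * ((Yᵀ * Y) * Uᵀ) := by rw [hU]; simp [Matrix.mul_assoc]
    rw [e, Matrix.trace_mul_comm]
    simp [Matrix.mul_assoc, hU]
  -- key identity for squared norms
  have key : ∀ Y : Matrix (Fin r) (Fin r) ℝ,
      (∑ i, ∑ j, ((X - U * Y * Uᵀ) i j) ^ 2)
        = (∑ i, ∑ j, (X i j) ^ 2) - (∑ i, ∑ j, (A i j) ^ 2)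
          + (∑ i, ∑ j, ((A - Y) i j) ^ 2) := by
    intro Y
    rw [sqnorm_eq_trace, sqnorm_eq_trace, sqnorm_eq_trace, sqnorm_eq_trace]
    have e1 : (X - U * Y * Uᵀ)ᵀ * (X - U * Y * Uᵀ)
        = Xᵀ * X - X * (U * Y * Uᵀ) - ((U * Y * Uᵀ)ᵀ * X
          - (U * Y * Uᵀ)ᵀ * (U * Y * Uᵀ)) := by
      rw [Matrix.transpose_sub, Matrix.sub_mul, Matrix.mul_sub, Matrix.mul_sub, hXt]
    have e2 : (A - Y)ᵀ * (A - Y)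
        = Aᵀ * A - A * Y - (Yᵀ * A - Yᵀ * Y) := by
      rw [Matrix.transpose_sub, Matrix.sub_mul, Matrix.mul_sub, Matrix.mul_sub, hAt]
    rw [e1, e2]
    simp only [Matrix.trace_sub, t1 Y, t2 Y, t3 Y, hAt]
    ring
  intro Z _
  constructor
  · intro h Y hY
    have h1 := h Y hY
    unfold frobNorm at h1 ⊢
    rw [key Z, key Y] at h1
    have h2 := (Real.sqrt_le_sqrt_iff
      (by rw [← key Y]; exact sqnorm_nonneg _)).mp h1
    exact Real.sqrt_le_sqrt (by linarith)
  · intro h Y hY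
    have h1 := h Y hY
    unfold frobNorm at h1 ⊢
    have h2 : (∑ i, ∑ j, ((A - Z) i j) ^ 2) ≤ (∑ i, ∑ j, ((A - Y) i j) ^ 2) :=
      (Real.sqrt_le_sqrt_iff (sqnorm_nonneg _)).mp h1
    rw [key Z, key Y]
    exact Real.sqrt_le_sqrt (by linarith)
end

section
/- Let U and V be n×r matrices with orthonormal columns and let Γ be the vector of principal angles between range U and range V (so cos Γ is the vector of singular values of UᵀV). Then for any PSD matrix Z ∈ S^r_+, the Frobenius distance from VZVᵀ to the cone {UAUᵀ : A ∈ S^r_+} is at most √2 · ‖Z‖_F · ‖sin Γ‖₂. -/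
/-!
With `P = U Uᵀ` the orthogonal projection onto range U, the choice `A = Uᵀ V Z Vᵀ U` gives
`U A Uᵀ = P X P` for `X = V Z Vᵀ`. Since `X - P X P = (1 - P) X + P X (1 - P)` is an orthogonal
sum and `X` is symmetric, `‖X - P X P‖² ≤ 2 ‖(1 - P) X‖²`. Finally
`‖(1 - P) X‖ = ‖(1 - P) V Z‖ ≤ ‖(1 - P) V‖ ‖Z‖` and `‖(1 - P) V‖² = tr (1 - (Vᵀ U)(Vᵀ U)ᵀ)`.
-/

open Matrix BigOperators

section FrobeniusNorm

variable {l m k : ℕ}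

lemma frobNorm_nonneg (A : Matrix (Fin m) (Fin k) ℝ) : 0 ≤ frobNorm A :=
  Real.sqrt_nonneg _

lemma frobNorm_eq_sqrt_trace (A : Matrix (Fin m) (Fin k) ℝ) :
    frobNorm A = √(Aᵀ * A).trace := by
  rw [frobNorm, trace, Finset.sum_comm]
  simp [mul_apply, sq]

lemma frobNorm_sq (A : Matrix (Fin m) (Fin k) ℝ) : frobNorm A ^ 2 = (Aᵀ * A).trace := by
  rw [frobNorm_eq_sqrt_trace, Real.sq_sqrt]
  simpa [conjTranspose_eq_transpose_of_trivial] using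
    (posSemidef_conjTranspose_mul_self A).trace_nonneg

section

attribute [local instance] Matrix.frobeniusNormedAddCommGroup

lemma frobNorm_eq_norm (A : Matrix (Fin m) (Fin k) ℝ) : frobNorm A = ‖A‖ := by
  rw [frobNorm, frobenius_norm_def, Real.sqrt_eq_rpow]
  simp [Real.norm_eq_abs, sq_abs]

lemma frobNorm_mul_le (A : Matrix (Fin l) (Fin m) ℝ) (B : Matrix (Fin m) (Fin k) ℝ) :
    frobNorm (A * B) ≤ frobNorm A * frobNorm B := by
  simpa only [frobNorm_eq_norm] using frobenius_norm_mul A B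

lemma frobNorm_transpose (A : Matrix (Fin m) (Fin k) ℝ) : frobNorm Aᵀ = frobNorm A := by
  simpa only [frobNorm_eq_norm] using frobenius_norm_transpose A

end

lemma frobNorm_add_sq_of_transpose_mul_eq_zero {A B : Matrix (Fin m) (Fin k) ℝ}
    (h : Aᵀ * B = 0) : frobNorm (A + B) ^ 2 = frobNorm A ^ 2 + frobNorm B ^ 2 := by
  have h' : Bᵀ * A = 0 := by rw [← transpose_transpose A, ← transpose_mul, h, transpose_zero]
  rw [frobNorm_sq, frobNorm_sq, frobNorm_sq, transpose_add, Matrix.add_mul, Matrix.mul_add,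
    Matrix.mul_add, h, h', trace_add, trace_add, trace_add, trace_zero]
  ring

lemma frobNorm_mul_of_transpose_mul_self_eq_one {V : Matrix (Fin m) (Fin k) ℝ}
    (hV : Vᵀ * V = 1) (N : Matrix (Fin k) (Fin l) ℝ) : frobNorm (V * N) = frobNorm N := by
  rw [frobNorm_eq_sqrt_trace, frobNorm_eq_sqrt_trace, transpose_mul, Matrix.mul_assoc,
    ← Matrix.mul_assoc Vᵀ, hV, Matrix.one_mul]

lemma frobNorm_mul_transpose_of_transpose_mul_self_eq_one {V : Matrix (Fin m) (Fin k) ℝ}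
    (hV : Vᵀ * V = 1) (M : Matrix (Fin l) (Fin k) ℝ) : frobNorm (M * Vᵀ) = frobNorm M := by
  rw [← frobNorm_transpose, transpose_mul, transpose_transpose,
    frobNorm_mul_of_transpose_mul_self_eq_one hV, frobNorm_transpose]

end FrobeniusNorm

section OrthogonalProjection

variable {m k : ℕ} {P : Matrix (Fin m) (Fin m) ℝ}

lemma frobNorm_mul_sq_of_isSymm_of_isIdempotentElem (hPs : P.IsSymm) (hPi : IsIdempotentElem P)
    (M : Matrix (Fin m) (Fin k) ℝ) : frobNorm (P * M) ^ 2 = (Mᵀ * P * M).trace := by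
  rw [frobNorm_sq, transpose_mul, hPs.eq, Matrix.mul_assoc, ← Matrix.mul_assoc P, hPi.eq,
    Matrix.mul_assoc]

lemma frobNorm_mul_le_of_isSymm_of_isIdempotentElem (hPs : P.IsSymm) (hPi : IsIdempotentElem P)
    (M : Matrix (Fin m) (Fin k) ℝ) : frobNorm (P * M) ≤ frobNorm M := by
  have horth : (P * M)ᵀ * ((1 - P) * M) = 0 := by
    rw [transpose_mul, hPs.eq, Matrix.mul_assoc, ← Matrix.mul_assoc P, hPi.mul_one_sub_self,
      Matrix.zero_mul, Matrix.mul_zero]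
  have hsplit := frobNorm_add_sq_of_transpose_mul_eq_zero horth
  rw [← Matrix.add_mul, add_sub_cancel, Matrix.one_mul] at hsplit
  refine le_of_sq_le_sq ?_ (frobNorm_nonneg M)
  nlinarith [sq_nonneg (frobNorm ((1 - P) * M))]

lemma frobNorm_sub_compression_le (hPs : P.IsSymm) (hPi : IsIdempotentElem P)
    {X : Matrix (Fin m) (Fin m) ℝ} (hX : X.IsSymm) :
    frobNorm (X - P * X * P) ≤ √2 * frobNorm ((1 - P) * X) := by
  have hQs : (1 - P).IsSymm := isSymm_one.sub hPs
  have hdecomp : X - P * X * P = (1 - P) * X + P * (X * (1 - P)) := by noncomm_ring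
  have horth : ((1 - P) * X)ᵀ * (P * (X * (1 - P))) = 0 := by
    rw [transpose_mul, hX.eq, hQs.eq, Matrix.mul_assoc, ← Matrix.mul_assoc (1 - P),
      hPi.one_sub_mul_self, Matrix.zero_mul, Matrix.mul_zero]
  have hreflect : frobNorm (X * (1 - P)) = frobNorm ((1 - P) * X) := by
    rw [← frobNorm_transpose, transpose_mul, hX.eq, hQs.eq]
  have hsq : frobNorm (X - P * X * P) ^ 2 ≤ 2 * frobNorm ((1 - P) * X) ^ 2 := by
    rw [hdecomp, frobNorm_add_sq_of_transpose_mul_eq_zero horth, two_mul, ← hreflect]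
    gcongr
    · exact frobNorm_nonneg _
    · exact frobNorm_mul_le_of_isSymm_of_isIdempotentElem hPs hPi _
  calc frobNorm (X - P * X * P) ≤ √(2 * frobNorm ((1 - P) * X) ^ 2) :=
        Real.le_sqrt_of_sq_le hsq
    _ = √2 * frobNorm ((1 - P) * X) := by
        rw [Real.sqrt_mul zero_le_two, Real.sqrt_sq (frobNorm_nonneg _)]

end OrthogonalProjection

lemma isIdempotentElem_mul_transpose_self {m k : ℕ} {U : Matrix (Fin m) (Fin k) ℝ}
    (hU : Uᵀ * U = 1) : IsIdempotentElem (U * Uᵀ) := by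
  rw [IsIdempotentElem, Matrix.mul_assoc, ← Matrix.mul_assoc Uᵀ, hU, Matrix.one_mul]

theorem dist_between_faces {n r : ℕ} (U V : Matrix (Fin n) (Fin r) ℝ)
    (hU : Uᵀ * U = 1) (hV : Vᵀ * V = 1)
    (Z : Matrix (Fin r) (Fin r) ℝ) (hZ : Z.PosSemidef) :
    ∃ A : Matrix (Fin r) (Fin r) ℝ, A.PosSemidef ∧
      frobNorm (V * Z * Vᵀ - U * A * Uᵀ) ≤
        Real.sqrt 2 * frobNorm Z *
          Real.sqrt ((1 - (Vᵀ * U) * (Vᵀ * U)ᵀ).trace) := by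
  set P := U * Uᵀ with hP
  have hPs : P.IsSymm := by rw [IsSymm, hP, transpose_mul, transpose_transpose]
  have hPi : IsIdempotentElem P := isIdempotentElem_mul_transpose_self hU
  have hZs : Z.IsSymm := isHermitian_iff_isSymm.mp hZ.isHermitian
  have hXs : (V * Z * Vᵀ).IsSymm := by
    rw [IsSymm, transpose_mul, transpose_mul, transpose_transpose, hZs.eq, Matrix.mul_assoc]
  have hcompress : U * ((Vᵀ * U)ᵀ * Z * (Vᵀ * U)) * Uᵀ = P * (V * Z * Vᵀ) * P := by
    simp only [hP, transpose_mul, transpose_transpose, Matrix.mul_assoc]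
  have hdefect : frobNorm ((1 - P) * V) ^ 2 = (1 - (Vᵀ * U) * (Vᵀ * U)ᵀ).trace := by
    rw [frobNorm_mul_sq_of_isSymm_of_isIdempotentElem (isSymm_one.sub hPs) hPi.one_sub]
    simp only [hP, Matrix.mul_sub, Matrix.sub_mul, Matrix.mul_one, hV, transpose_mul,
      transpose_transpose, Matrix.mul_assoc]
  refine ⟨(Vᵀ * U)ᵀ * Z * (Vᵀ * U), ?_, ?_⟩
  · simpa [conjTranspose_eq_transpose_of_trivial] using hZ.mul_mul_conjTranspose_same (Vᵀ * U)ᵀ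
  rw [← hdefect, Real.sqrt_sq (frobNorm_nonneg _), hcompress, mul_right_comm]
  calc frobNorm (V * Z * Vᵀ - P * (V * Z * Vᵀ) * P)
      ≤ √2 * frobNorm ((1 - P) * (V * Z * Vᵀ)) := frobNorm_sub_compression_le hPs hPi hXs
    _ = √2 * frobNorm ((1 - P) * V * Z) := by
        rw [← Matrix.mul_assoc, ← Matrix.mul_assoc,
          frobNorm_mul_transpose_of_transpose_mul_self_eq_one hV]
    _ ≤ √2 * frobNorm ((1 - P) * V) * frobNorm Z := by
        rw [mul_assoc]; gcongr; exact frobNorm_mul_le _ _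
end

section
/- Let U, V be n×r matrices with orthonormal columns, Δ = I − (VᵀU)(VᵀU)ᵀ, and Z ∈ S^r_+. Then ‖VZVᵀ − UUᵀ(VZVᵀ)UUᵀ‖_F² = 2 tr(Z²Δ) − ‖Z^{1/2} Δ Z^{1/2}‖_F², and in particular this quantity is at most 2‖Z‖_F² λ_max(Δ). -/
open Matrix BigOperators

/-!
Write `A = V Z Vᵀ` and `P = U Uᵀ`, an orthogonal projection. Since `P² = P`, the trace of
`(A - PAP)²` telescopes to `tr(A²) - tr((AP)²)`, and cyclicity moves the conjugation by `V`
inside: `tr(A²) = tr(Z²)` and `tr((AP)²) = tr((ZG)²)` with `G = VᵀPV = 1 - Δ`. Expanding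
`(Z(1 - Δ))²` gives `2 tr(Z²Δ) - tr((ZΔ)²)`, and `tr((ZΔ)²) = ‖Z^{1/2} Δ Z^{1/2}‖_F²`.
For the bound, drop the nonpositive term and use `tr(Z Δ Z) ≤ μ tr(Z²)`, which is the positivity of
the trace of `Z (μ - Δ) Z`.
-/

section Trace

variable {m k R : Type*} [Fintype m] [Fintype k] [CommRing R]

theorem trace_sq_sub_conj_of_isIdempotentElem {A P : Matrix m m R} (hP : IsIdempotentElem P) :
    ((A - P * A * P) * (A - P * A * P)).trace = (A * A).trace - (A * P * A * P).trace := by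
  have hPAP : (P * A * P * A).trace = (A * P * A * P).trace := by
    rw [show P * A * P * A = P * (A * P * A) by simp only [Matrix.mul_assoc], trace_mul_comm]
  have hPAPPAP : (P * A * P * (P * A * P)).trace = (A * P * A * P).trace := by
    rw [show P * A * P * (P * A * P) = P * (A * (P * P) * A * P) by
        simp only [Matrix.mul_assoc], trace_mul_comm, hP.eq]
    simp only [Matrix.mul_assoc, hP.eq]
  rw [show (A - P * A * P) * (A - P * A * P)
      = A * A - A * (P * A * P) - P * A * P * A + P * A * P * (P * A * P) by noncomm_ring,
    trace_add, trace_sub, trace_sub, hPAP, hPAPPAP]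
  simp only [Matrix.mul_assoc]
  ring

theorem trace_conj_mul_conj (V : Matrix m k R) (Z : Matrix k k R) (P : Matrix m m R) :
    (V * Z * Vᵀ * P * (V * Z * Vᵀ) * P).trace
      = (Z * (Vᵀ * P * V) * Z * (Vᵀ * P * V)).trace := by
  rw [show V * Z * Vᵀ * P * (V * Z * Vᵀ) * P = V * (Z * (Vᵀ * P * V) * Z * (Vᵀ * P)) by
      simp only [Matrix.mul_assoc], trace_mul_comm]
  simp only [Matrix.mul_assoc]

theorem trace_sq_sub_trace_mul_one_sub_sq [DecidableEq k] (Z Δ : Matrix k k R) :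
    (Z * Z).trace - (Z * (1 - Δ) * Z * (1 - Δ)).trace
      = 2 * (Z * Z * Δ).trace - (Z * Δ * Z * Δ).trace := by
  rw [show Z * (1 - Δ) * Z * (1 - Δ) = Z * Z - Z * Z * Δ - Z * Δ * Z + Z * Δ * Z * Δ by
      noncomm_ring, trace_add, trace_sub, trace_sub, trace_mul_cycle Z Δ Z]
  ring

end Trace

theorem trace_mul_mul_le_of_posSemidef_smul_one_sub {k : Type*} [Fintype k] [DecidableEq k]
    {Z Δ : Matrix k k ℝ} (hZ : Zᵀ = Z) {μ : ℝ} (hμΔ : (μ • (1 : Matrix k k ℝ) - Δ).PosSemidef) :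
    (Z * Z * Δ).trace ≤ μ * (Z * Z).trace := by
  have hpos := (hμΔ.mul_mul_conjTranspose_same Z).trace_nonneg
  rw [conjTranspose_eq_transpose_of_trivial, hZ, Matrix.mul_sub, Matrix.sub_mul,
    Matrix.mul_smul, Matrix.smul_mul, Matrix.mul_one, trace_sub, trace_smul,
    trace_mul_cycle Z Δ Z, smul_eq_mul] at hpos
  linarith

theorem frobNorm_sq_eq_trace_transpose_mul {m k : ℕ} (A : Matrix (Fin m) (Fin k) ℝ) :
    frobNorm A ^ 2 = (Aᵀ * A).trace := by
  rw [frobNorm, Real.sq_sqrt (by positivity), trace, Finset.sum_comm]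
  simp [mul_apply, sq]

theorem frobNorm_sq_of_transpose_eq {m : ℕ} {A : Matrix (Fin m) (Fin m) ℝ} (hA : Aᵀ = A) :
    frobNorm A ^ 2 = (A * A).trace := by
  rw [frobNorm_sq_eq_trace_transpose_mul, hA]

theorem frobNorm_sq_conj_sub_proj {n r s : ℕ} {U : Matrix (Fin n) (Fin s) ℝ}
    {V : Matrix (Fin n) (Fin r) ℝ} (hU : Uᵀ * U = 1) (hV : Vᵀ * V = 1)
    {Z : Matrix (Fin r) (Fin r) ℝ} (hZ : Zᵀ = Z) :
    frobNorm (V * Z * Vᵀ - U * Uᵀ * (V * Z * Vᵀ) * U * Uᵀ) ^ 2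
      = (Z * Z).trace - (Z * ((Vᵀ * U) * (Vᵀ * U)ᵀ) * Z * ((Vᵀ * U) * (Vᵀ * U)ᵀ)).trace := by
  have hproj : IsIdempotentElem (U * Uᵀ) := by
    rw [IsIdempotentElem, Matrix.mul_assoc, ← Matrix.mul_assoc Uᵀ, hU, Matrix.one_mul]
  have hsymm : (V * Z * Vᵀ - U * Uᵀ * (V * Z * Vᵀ) * U * Uᵀ)ᵀ
      = V * Z * Vᵀ - U * Uᵀ * (V * Z * Vᵀ) * U * Uᵀ := by
    simp only [transpose_sub, transpose_mul, transpose_transpose, hZ, Matrix.mul_assoc]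
  have hG : Vᵀ * (U * Uᵀ) * V = (Vᵀ * U) * (Vᵀ * U)ᵀ := by
    simp only [transpose_mul, transpose_transpose, Matrix.mul_assoc]
  have hAA : (V * Z * Vᵀ * (V * Z * Vᵀ)).trace = (Z * Z).trace := by
    simpa [hV] using trace_conj_mul_conj V Z 1
  rw [frobNorm_sq_of_transpose_eq hsymm, show U * Uᵀ * (V * Z * Vᵀ) * U * Uᵀ
      = U * Uᵀ * (V * Z * Vᵀ) * (U * Uᵀ) by simp only [Matrix.mul_assoc],
    trace_sq_sub_conj_of_isIdempotentElem hproj, trace_conj_mul_conj, hAA, hG]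

theorem frobNorm_sq_mul_mul_self {r : ℕ} {S Δ : Matrix (Fin r) (Fin r) ℝ} (hS : Sᵀ = S)
    (hΔ : Δᵀ = Δ) : frobNorm (S * Δ * S) ^ 2 = (S * S * Δ * (S * S) * Δ).trace := by
  rw [frobNorm_sq_of_transpose_eq (by simp only [transpose_mul, hS, hΔ, Matrix.mul_assoc]),
    show S * Δ * S * (S * Δ * S) = S * (Δ * (S * S) * Δ * S) by simp only [Matrix.mul_assoc],
    trace_mul_comm, show Δ * (S * S) * Δ * S * S = Δ * (S * S) * Δ * (S * S) by
      simp only [Matrix.mul_assoc], trace_mul_comm]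
  simp only [Matrix.mul_assoc]

theorem dist_identity_and_bound_general {n r : ℕ} (U V : Matrix (Fin n) (Fin r) ℝ)
    (hU : Uᵀ * U = 1) (hV : Vᵀ * V = 1)
    (Z : Matrix (Fin r) (Fin r) ℝ)
    (S : Matrix (Fin r) (Fin r) ℝ) (hS : S.PosSemidef) (hSZ : S * S = Z) :
    let Δ : Matrix (Fin r) (Fin r) ℝ := 1 - (Vᵀ * U) * (Vᵀ * U)ᵀ
    (frobNorm (V * Z * Vᵀ - U * Uᵀ * (V * Z * Vᵀ) * U * Uᵀ)) ^ 2 =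
        2 * ((Z * Z * Δ).trace) - (frobNorm (S * Δ * S)) ^ 2 ∧
      ∀ μ : ℝ, 0 ≤ μ → (μ • (1 : Matrix (Fin r) (Fin r) ℝ) - Δ).PosSemidef →
        (frobNorm (V * Z * Vᵀ - U * Uᵀ * (V * Z * Vᵀ) * U * Uᵀ)) ^ 2 ≤
          2 * (frobNorm Z) ^ 2 * μ := by
  intro Δ
  have hSt : Sᵀ = S := by simpa only [conjTranspose_eq_transpose_of_trivial] using hS.1.eq
  have hZt : Zᵀ = Z := by rw [← hSZ, transpose_mul, hSt]
  have hΔt : Δᵀ = Δ := by simp [Δ, transpose_sub, transpose_mul]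
  have identity : frobNorm (V * Z * Vᵀ - U * Uᵀ * (V * Z * Vᵀ) * U * Uᵀ) ^ 2
      = 2 * (Z * Z * Δ).trace - frobNorm (S * Δ * S) ^ 2 := by
    rw [frobNorm_sq_conj_sub_proj hU hV hZt, frobNorm_sq_mul_mul_self hSt hΔt, hSZ,
      ← trace_sq_sub_trace_mul_one_sub_sq, sub_sub_cancel]
  refine ⟨identity, fun μ _ hμΔ => ?_⟩
  have hle := trace_mul_mul_le_of_posSemidef_smul_one_sub hZt hμΔ
  rw [identity, frobNorm_sq_of_transpose_eq hZt]
  nlinarith [sq_nonneg (frobNorm (S * Δ * S))]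

theorem dist_identity_and_bound {n r : ℕ} (U V : Matrix (Fin n) (Fin r) ℝ)
    (hU : Uᵀ * U = 1) (hV : Vᵀ * V = 1)
    (Z : Matrix (Fin r) (Fin r) ℝ) (hZ : Z.PosSemidef)
    (S : Matrix (Fin r) (Fin r) ℝ) (hS : S.PosSemidef) (hSZ : S * S = Z) :
    let Δ : Matrix (Fin r) (Fin r) ℝ := 1 - (Vᵀ * U) * (Vᵀ * U)ᵀ
    (frobNorm (V * Z * Vᵀ - U * Uᵀ * (V * Z * Vᵀ) * U * Uᵀ)) ^ 2 =
        2 * ((Z * Z * Δ).trace) - (frobNorm (S * Δ * S)) ^ 2 ∧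
      ∀ μ : ℝ, 0 ≤ μ → (μ • (1 : Matrix (Fin r) (Fin r) ℝ) - Δ).PosSemidef →
        (frobNorm (V * Z * Vᵀ - U * Uᵀ * (V * Z * Vᵀ) * U * Uᵀ)) ^ 2 ≤
          2 * (frobNorm Z) ^ 2 * μ :=
  dist_identity_and_bound_general U V hU hV Z S hS hSZ
end
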